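/- Shift invariance of the Bures–Wasserstein barycenter functional on Laplacian pseudo-inverses: let L₁†, …, Lₙ† be Moore–Penrose pseudo-inverses of connected graph Laplacians on k vertices (all PSD with kernel spanned by 𝟙), let λᵢ ≥ 0 sum to 1, and let J = (1/k)𝟙𝟙ᵀ. Then for any PSD matrix S whose kernel contains 𝟙 (i.e., S𝟙 = 0), the weighted sum of Bures–Wasserstein squared distances satisfies ∑ᵢ λᵢ d_BW(S, Lᵢ†)² = ∑ᵢ λᵢ d_BW(S + J, Lᵢ† + J)² − c for a constant c independent of S; in particular minimizers over {S PSD : S𝟙 = 0} correspond under the shift S ↦ S + J. -/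

import Mathlib

open Matrix Finset

/-- The unique positive semidefinite square root of a positive semidefinite
matrix (junk value `0` off the PSD matrices). -/
noncomputable def msqrt {d : ℕ} (A : Matrix (Fin d) (Fin d) ℝ) :
    Matrix (Fin d) (Fin d) ℝ :=
  open scoped Classical MatrixOrder in if h : A.PosSemidef then CFC.sqrt A else 0

/-- The Bures–Wasserstein squared distance between PSD matrices. -/
noncomputable def dBWsq {d : ℕ} (A B : Matrix (Fin d) (Fin d) ℝ) : ℝ :=
  A.trace + B.trace - 2 * (msqrt (msqrt A * B * msqrt A)).trace

/-! If `A * P = 0` for PSD `A` and an orthogonal projection `P`, then `√A * P = 0` as well, since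
`(√A P)ᴴ (√A P) = P A P = 0`. Hence `√(A + P) = √A + P` and
`√(A + P) (B + P) √(A + P) = √A B √A + P` whenever also `B * P = 0`, so adding `P` to both
arguments adds `2 Tr P` to the trace terms and `-2 Tr P` to the cross term of `d_BW²`.
With `P = J` every summand of the objective is unchanged, and the shift constant is `0`. -/

lemma IsSelfAdjoint.mul_eq_zero_symm {R : Type*} [NonUnitalSemiring R] [StarRing R] {a b : R}
    (ha : IsSelfAdjoint a) (hb : IsSelfAdjoint b) (h : a * b = 0) : b * a = 0 := by
  simpa [star_mul, ha.star_eq, hb.star_eq] using congrArg star h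

section CFCSqrt

open scoped MatrixOrder ComplexOrder

variable {n 𝕜 : Type*} [Fintype n] [DecidableEq n] [RCLike 𝕜]

lemma Matrix.cfcSqrt_mul_eq_zero_of_mul_eq_zero {A P : Matrix n n 𝕜} (hA : 0 ≤ A)
    (hP : IsSelfAdjoint P) (h : A * P = 0) : CFC.sqrt A * P = 0 := by
  rw [← conjTranspose_mul_self_eq_zero, ← star_eq_conjTranspose, star_mul, hP.star_eq,
    (CFC.sqrt_nonneg A).isSelfAdjoint.star_eq]
  calc P * CFC.sqrt A * (CFC.sqrt A * P) = P * (CFC.sqrt A * CFC.sqrt A * P) := by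
        simp only [Matrix.mul_assoc]
    _ = 0 := by rw [CFC.sqrt_mul_sqrt_self A hA, h, Matrix.mul_zero]

lemma Matrix.cfcSqrt_add_of_mul_eq_zero {A B : Matrix n n 𝕜} (hA : 0 ≤ A) (hB : 0 ≤ B)
    (h : A * B = 0) : CFC.sqrt (A + B) = CFC.sqrt A + CFC.sqrt B := by
  have hsA := (CFC.sqrt_nonneg A).isSelfAdjoint
  have hBA : CFC.sqrt B * CFC.sqrt A = 0 :=
    cfcSqrt_mul_eq_zero_of_mul_eq_zero hB hsA <| hsA.mul_eq_zero_symm hB.isSelfAdjoint <|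
      cfcSqrt_mul_eq_zero_of_mul_eq_zero hA hB.isSelfAdjoint h
  have hAB := (CFC.sqrt_nonneg B).isSelfAdjoint.mul_eq_zero_symm hsA hBA
  refine CFC.sqrt_unique ?_ (add_nonneg (CFC.sqrt_nonneg A) (CFC.sqrt_nonneg B))
  rw [add_mul, mul_add, mul_add, hAB, hBA, CFC.sqrt_mul_sqrt_self A hA,
    CFC.sqrt_mul_sqrt_self B hB, add_zero, zero_add]

end CFCSqrt

section Msqrt

open scoped MatrixOrder

variable {d : ℕ}

lemma msqrt_of_posSemidef {A : Matrix (Fin d) (Fin d) ℝ} (hA : A.PosSemidef) :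
    msqrt A = CFC.sqrt A := by
  simp only [msqrt, hA, dite_true]

lemma posSemidef_msqrt (A : Matrix (Fin d) (Fin d) ℝ) : (msqrt A).PosSemidef := by
  unfold msqrt
  split_ifs
  · exact nonneg_iff_posSemidef.mp (CFC.sqrt_nonneg A)
  · exact .zero

lemma msqrt_add_of_mul_eq_zero {A B : Matrix (Fin d) (Fin d) ℝ} (hA : A.PosSemidef)
    (hB : B.PosSemidef) (h : A * B = 0) : msqrt (A + B) = msqrt A + msqrt B := by
  rw [msqrt_of_posSemidef hA, msqrt_of_posSemidef hB, msqrt_of_posSemidef (hA.add hB)]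
  exact cfcSqrt_add_of_mul_eq_zero hA.nonneg hB.nonneg h

lemma msqrt_eq_self_of_isIdempotentElem {P : Matrix (Fin d) (Fin d) ℝ} (hP : P.PosSemidef)
    (hPP : IsIdempotentElem P) : msqrt P = P := by
  rw [msqrt_of_posSemidef hP]
  exact CFC.sqrt_unique hPP hP.nonneg

lemma msqrt_mul_eq_zero_of_mul_eq_zero {A P : Matrix (Fin d) (Fin d) ℝ} (hA : A.PosSemidef)
    (hP : IsSelfAdjoint P) (h : A * P = 0) : msqrt A * P = 0 := by
  rw [msqrt_of_posSemidef hA]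
  exact cfcSqrt_mul_eq_zero_of_mul_eq_zero hA.nonneg hP h

lemma dBWsq_add_of_mul_eq_zero {A B P : Matrix (Fin d) (Fin d) ℝ} (hA : A.PosSemidef)
    (hB : B.PosSemidef) (hP : P.PosSemidef) (hPP : IsIdempotentElem P)
    (hAP : A * P = 0) (hBP : B * P = 0) :
    dBWsq (A + P) (B + P) = dBWsq A B := by
  set R := msqrt A
  have hR : R.PosSemidef := posSemidef_msqrt A
  have hRP : R * P = 0 := msqrt_mul_eq_zero_of_mul_eq_zero hA hP.nonneg.isSelfAdjoint hAP
  have hPR : P * R = 0 := hR.nonneg.isSelfAdjoint.mul_eq_zero_symm hP.nonneg.isSelfAdjoint hRP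
  have hPB : P * B = 0 := hB.nonneg.isSelfAdjoint.mul_eq_zero_symm hP.nonneg.isSelfAdjoint hBP
  have hRBR : (R * B * R).PosSemidef := by
    simpa only [hR.isHermitian.eq] using hB.conjTranspose_mul_mul_same R
  have hRBRP : R * B * R * P = 0 := by rw [Matrix.mul_assoc, hRP, Matrix.mul_zero]
  have hmid : (R + P) * (B + P) * (R + P) = R * B * R + P := by
    simp [add_mul, mul_add, hRP, hPR, hPB, hPP.eq, Matrix.mul_assoc R B P, hBP]
  rw [dBWsq, dBWsq, msqrt_add_of_mul_eq_zero hA hP hAP, msqrt_eq_self_of_isIdempotentElem hP hPP,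
    hmid, msqrt_add_of_mul_eq_zero hRBR hP hRBRP, msqrt_eq_self_of_isIdempotentElem hP hPP]
  simp only [trace_add]
  ring

end Msqrt

section Projection

variable {m : Type*} [Fintype m]

lemma isIdempotentElem_inv_dotProduct_smul_vecMulVec (v : m → ℝ) :
    IsIdempotentElem ((v ⬝ᵥ v)⁻¹ • vecMulVec v v) := by
  have hc : (v ⬝ᵥ v)⁻¹ * (v ⬝ᵥ v)⁻¹ * (v ⬝ᵥ v) = (v ⬝ᵥ v)⁻¹ := by
    simpa using mul_self_mul_inv (v ⬝ᵥ v)⁻¹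
  rw [IsIdempotentElem, smul_mul_smul, vecMulVec_mul_vecMulVec, vecMulVec_smul, smul_smul, hc]

lemma posSemidef_inv_dotProduct_smul_vecMulVec (v : m → ℝ) :
    ((v ⬝ᵥ v)⁻¹ • vecMulVec v v).PosSemidef :=
  (posSemidef_vecMulVec_self_star v).smul (inv_nonneg.mpr (dotProduct_self_star_nonneg v))

end Projection

theorem barycenter_shift_invariance_general {k n : ℕ}
    (Ldag : Fin n → Matrix (Fin k) (Fin k) ℝ)
    (hLdag : ∀ i, (Ldag i).PosSemidef)
    (hLdag1 : ∀ i, Ldag i *ᵥ (fun _ => (1 : ℝ)) = 0)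
    (lam : Fin n → ℝ)
    (J : Matrix (Fin k) (Fin k) ℝ)
    (hJ : J = (k : ℝ)⁻¹ • vecMulVec (fun _ => (1 : ℝ)) (fun _ => (1 : ℝ))) :
    (∃ c : ℝ, ∀ S : Matrix (Fin k) (Fin k) ℝ, S.PosSemidef →
        S *ᵥ (fun _ => (1 : ℝ)) = 0 →
        ∑ i, lam i * dBWsq S (Ldag i) =
          ∑ i, lam i * dBWsq (S + J) (Ldag i + J) - c) ∧
      (∀ S₀ : Matrix (Fin k) (Fin k) ℝ, S₀.PosSemidef →
        S₀ *ᵥ (fun _ => (1 : ℝ)) = 0 →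
        (∀ S : Matrix (Fin k) (Fin k) ℝ, S.PosSemidef →
          S *ᵥ (fun _ => (1 : ℝ)) = 0 →
          ∑ i, lam i * dBWsq S₀ (Ldag i) ≤ ∑ i, lam i * dBWsq S (Ldag i)) →
        (∀ S : Matrix (Fin k) (Fin k) ℝ, S.PosSemidef →
          S *ᵥ (fun _ => (1 : ℝ)) = 0 →
          ∑ i, lam i * dBWsq (S₀ + J) (Ldag i + J) ≤
            ∑ i, lam i * dBWsq (S + J) (Ldag i + J))) := by
  set one : Fin k → ℝ := fun _ => 1
  have hJ_proj : J = (one ⬝ᵥ one)⁻¹ • vecMulVec one one := by simp [hJ, one, dotProduct]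
  have hJ_psd : J.PosSemidef := hJ_proj ▸ posSemidef_inv_dotProduct_smul_vecMulVec one
  have hJ_idem : IsIdempotentElem J :=
    hJ_proj ▸ isIdempotentElem_inv_dotProduct_smul_vecMulVec one
  have mul_J : ∀ M : Matrix (Fin k) (Fin k) ℝ, M *ᵥ one = 0 → M * J = 0 := by
    intro M hM
    rw [hJ, Matrix.mul_smul, mul_vecMulVec, hM, zero_vecMulVec, smul_zero]
  have shift : ∀ S : Matrix (Fin k) (Fin k) ℝ, S.PosSemidef → S *ᵥ one = 0 →
      ∑ i, lam i * dBWsq (S + J) (Ldag i + J) = ∑ i, lam i * dBWsq S (Ldag i) :=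
    fun S hS hS1 => Finset.sum_congr rfl fun i _ => by
      rw [dBWsq_add_of_mul_eq_zero hS (hLdag i) hJ_psd hJ_idem (mul_J S hS1)
        (mul_J _ (hLdag1 i))]
  refine ⟨⟨0, fun S hS hS1 => by rw [shift S hS hS1, sub_zero]⟩,
    fun S₀ hS₀ hS₀1 hmin S hS hS1 => ?_⟩
  rw [shift S₀ hS₀ hS₀1, shift S hS hS1]
  exact hmin S hS hS1

/-- Shift invariance of the Bures–Wasserstein barycenter functional on
pseudo-inverses of connected graph Laplacians: the weighted objectives before
and after the shift `S ↦ S + J`, `Lᵢ† ↦ Lᵢ† + J` (with `J = (1/k)𝟙𝟙ᵀ`) differ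
by a constant independent of `S`; in particular minimizers over
`{S PSD : S𝟙 = 0}` correspond under the shift. -/
theorem barycenter_shift_invariance {k n : ℕ}
    (Ldag : Fin n → Matrix (Fin k) (Fin k) ℝ)
    (hLdag : ∀ i, (Ldag i).PosSemidef)
    (hLdag1 : ∀ i, Ldag i *ᵥ (fun _ => (1 : ℝ)) = 0)
    (lam : Fin n → ℝ) (hlam : ∀ i, 0 ≤ lam i) (hsum : ∑ i, lam i = 1)
    (J : Matrix (Fin k) (Fin k) ℝ)
    (hJ : J = (k : ℝ)⁻¹ • vecMulVec (fun _ => (1 : ℝ)) (fun _ => (1 : ℝ))) :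
    (∃ c : ℝ, ∀ S : Matrix (Fin k) (Fin k) ℝ, S.PosSemidef →
        S *ᵥ (fun _ => (1 : ℝ)) = 0 →
        ∑ i, lam i * dBWsq S (Ldag i) =
          ∑ i, lam i * dBWsq (S + J) (Ldag i + J) - c) ∧
      (∀ S₀ : Matrix (Fin k) (Fin k) ℝ, S₀.PosSemidef →
        S₀ *ᵥ (fun _ => (1 : ℝ)) = 0 →
        (∀ S : Matrix (Fin k) (Fin k) ℝ, S.PosSemidef →
          S *ᵥ (fun _ => (1 : ℝ)) = 0 →
          ∑ i, lam i * dBWsq S₀ (Ldag i) ≤ ∑ i, lam i * dBWsq S (Ldag i)) →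
        (∀ S : Matrix (Fin k) (Fin k) ℝ, S.PosSemidef →
          S *ᵥ (fun _ => (1 : ℝ)) = 0 →
          ∑ i, lam i * dBWsq (S₀ + J) (Ldag i + J) ≤
            ∑ i, lam i * dBWsq (S + J) (Ldag i + J))) :=
  barycenter_shift_invariance_general Ldag hLdag hLdag1 lam J hJ
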